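/- arXiv:1910.14514 — 3 statements merged into one kernel-verified Lean document; each statement's English description precedes it below -/
import Mathlib

section
/- Fix k ∈ ℂ and t ∈ ℝ. On the open interval y ∈ (|t|, ∞), the function y ↦ r(k,y,t) is differentiable, and its derivative equals D(k,y,t); that is, (d/dy) [(1/(2π)) ∫_{−π/2}^{π/2} cosh(k √(y²−t²) sin s) ds] = (k² y/(2π)) ∫_{−π/2}^{π/2} sin²(s) · g(k √(y²−t²) sin s) ds for all y > |t|. -/
open MeasureTheory

/-- The entire extension of `ζ ↦ sinh ζ / ζ`. -/
noncomputable def sinhc (z : ℂ) : ℂ := if z = 0 then 1 else Complex.sinh z / z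

/-- `r(k,y,t) = (1/(2π)) ∫_{−π/2}^{π/2} cosh(k √(y²−t²) sin s) ds`. -/
noncomputable def rker (k : ℂ) (y t : ℝ) : ℂ :=
  (1 / (2 * (Real.pi : ℂ))) *
    ∫ s in (-(Real.pi / 2))..(Real.pi / 2),
      Complex.cosh (k * (Real.sqrt (y ^ 2 - t ^ 2) : ℂ) * (Real.sin s : ℂ))

/-- `D(k,y,t) = (k² y/(2π)) ∫_{−π/2}^{π/2} sin² s · g(k √(y²−t²) sin s) ds`. -/
noncomputable def Dker (k : ℂ) (y t : ℝ) : ℂ :=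
  (k ^ 2 * (y : ℂ) / (2 * (Real.pi : ℂ))) *
    ∫ s in (-(Real.pi / 2))..(Real.pi / 2),
      ((Real.sin s : ℂ)) ^ 2 * sinhc (k * (Real.sqrt (y ^ 2 - t ^ 2) : ℂ) * (Real.sin s : ℂ))

/-! `r(k, y, t) = G(k √(y² − t²)) / (2π)` with `G(w) = ∫ cosh(w sin s) ds` entire in `w`.
Differentiating under the integral sign (the `w`-derivative of the integrand is jointly continuous,
hence bounded on compacts) and the chain rule give
`r' = (1/2π) ∫ sin s · sinh(w sin s) ds · k y / √(y² − t²)`, and `sinh ζ = ζ g(ζ)` turns this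
into `D(k, y, t)`. -/

theorem hasDerivAt_integral_comp_mul {f : ℂ → ℂ} (hf : Differentiable ℂ f) {c : ℝ → ℂ}
    (hc : Continuous c) (a b : ℝ) (w : ℂ) :
    HasDerivAt (fun w => ∫ s in a..b, f (w * c s)) (∫ s in a..b, c s * deriv f (w * c s)) w := by
  have hF' : Continuous fun p : ℂ × ℝ => c p.2 * deriv f (p.1 * c p.2) :=
    (hc.comp continuous_snd).mul ((hf.contDiff (n := 1)).continuous_deriv le_rfl |>.comp
      (continuous_fst.mul (hc.comp continuous_snd)))
  obtain ⟨C, hC⟩ := ((isCompact_closedBall w 1).prod isCompact_uIcc).exists_bound_of_continuousOn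
    hF'.continuousOn
  have hF (v : ℂ) : Continuous fun s => f (v * c s) := hf.continuous.comp (continuous_const.mul hc)
  refine (intervalIntegral.hasDerivAt_integral_of_dominated_loc_of_deriv_le (bound := fun _ => C)
    (Metric.ball_mem_nhds w one_pos) (.of_forall fun v => (hF v).aestronglyMeasurable)
    ((hF w).intervalIntegrable _ _) (hF'.comp (Continuous.prodMk_right w)).aestronglyMeasurable
    (.of_forall fun s hs v hv =>
      hC (v, s) ⟨Metric.ball_subset_closedBall hv, Set.uIoc_subset_uIcc hs⟩)
    intervalIntegrable_const (.of_forall fun s _ v _ => ?_)).2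
  exact ((hf _).hasDerivAt.comp v (hasDerivAt_mul_const (c s))).congr_deriv (mul_comm _ _)

theorem sinh_eq_mul_sinhc (w : ℂ) : Complex.sinh w = w * sinhc w := by
  by_cases hw : w = 0
  · simp [hw]
  · simp [sinhc, hw, mul_div_cancel₀]

theorem hasDerivAt_sqrt_sq_sub {t x : ℝ} (hx : x ^ 2 - t ^ 2 ≠ 0) :
    HasDerivAt (fun x : ℝ => √(x ^ 2 - t ^ 2)) (x / √(x ^ 2 - t ^ 2)) x := by
  convert ((hasDerivAt_pow 2 x).sub_const (t ^ 2)).sqrt hx using 1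
  field_simp
  ring

open Real in
theorem Dker_eq_of_sqrt_ne_zero {k : ℂ} {y t : ℝ} (hz : √(y ^ 2 - t ^ 2) ≠ 0) :
    Dker k y t = 1 / (2 * π) * ((∫ s in -(π / 2)..π / 2,
      (sin s : ℂ) * Complex.sinh (k * √(y ^ 2 - t ^ 2) * sin s)) * (k * ↑(y / √(y ^ 2 - t ^ 2)))) := by
  have hsinh (s : ℝ) : (sin s : ℂ) * Complex.sinh (k * √(y ^ 2 - t ^ 2) * sin s) =
      k * √(y ^ 2 - t ^ 2) * ((sin s : ℂ) ^ 2 * sinhc (k * √(y ^ 2 - t ^ 2) * sin s)) := by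
    rw [sinh_eq_mul_sinhc]
    ring
  have hz' : (√(y ^ 2 - t ^ 2) : ℂ) ≠ 0 := Complex.ofReal_ne_zero.2 hz
  simp_rw [hsinh, intervalIntegral.integral_const_mul, Dker, Complex.ofReal_div]
  -- otherwise `field_simp` reorders the two copies of the integrand differently
  generalize (∫ s in -(π / 2)..π / 2, (_ : ℂ)) = I
  field_simp

/-- For fixed `k ∈ ℂ`, `t ∈ ℝ` and any `y > |t|`, the map
`y ↦ r(k,y,t)` is differentiable at `y` with derivative `D(k,y,t)`. -/
theorem hasDerivAt_rker (k : ℂ) (t : ℝ) :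
    ∀ y : ℝ, |t| < y → HasDerivAt (fun y' : ℝ => rker k y' t) (Dker k y t) y := by
  intro y hy
  have hpos : 0 < y ^ 2 - t ^ 2 := sub_pos.2 (sq_lt_sq.2 (hy.trans_le (le_abs_self y)))
  have hw := ((hasDerivAt_sqrt_sq_sub hpos.ne').ofReal_comp).const_mul k
  have hG := (hasDerivAt_integral_comp_mul Complex.differentiable_cosh
    (Complex.continuous_ofReal.comp Real.continuous_sin) (-(Real.pi / 2)) (Real.pi / 2) _).comp y hw
  rw [Complex.deriv_cosh] at hG
  rw [Dker_eq_of_sqrt_ne_zero (Real.sqrt_pos.2 hpos).ne']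
  exact hG.const_mul _
end

section
/- Fix k ∈ ℂ. On the open region {(y,t) ∈ ℝ² : y > |t|}, the function (y,t) ↦ r(k,y,t) is twice continuously differentiable and satisfies the Klein–Gordon-type equation ∂²r/∂t² − ∂²r/∂y² + k²·r = 0. -/
open MeasureTheory

/-!
Expanding `cosh` in its Taylor series and integrating term by term against Wallis' integrals
`∫_{-π/2}^{π/2} sin²ⁿ = π (2n)! / (4ⁿ n!²)` gives `r(k,y,t) = h(k²(y² − t²)/4) / 2`, where
`h(u) = ∑ uⁿ / n!² = I₀(2√u)` is entire. For a function of `w = y² − t²` the operator `∂²_t − ∂²_y`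
becomes `−4 (w ∂²_w + ∂_w)`, so the Klein–Gordon equation reduces to the Bessel-type equation
`u h'' + h' = h`, which holds coefficientwise because `(n + 1)² / (n + 1)!² = 1 / n!²`.
-/

open Real Topology
open scoped Nat

noncomputable def powerSum (b : ℕ → ℂ) (w : ℂ) : ℂ := ∑' n, b n * w ^ n

def derivCoeff (b : ℕ → ℂ) (n : ℕ) : ℂ := (n + 1) * b (n + 1)

def IsEntireCoeffs (b : ℕ → ℂ) : Prop := ∀ R : ℝ, 0 ≤ R → Summable fun n ↦ ‖b n‖ * R ^ n

namespace IsEntireCoeffs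

variable {b : ℕ → ℂ}

lemma summable_succ_mul_norm_mul_pow (hb : IsEntireCoeffs b) {R : ℝ} (hR : 0 ≤ R) :
    Summable fun n : ℕ ↦ (n + 1) * ‖b n‖ * R ^ n := by
  refine (hb (2 * (R + 1)) (by positivity)).of_nonneg_of_le (fun n ↦ by positivity) fun n ↦ ?_
  have h2 : (n : ℝ) + 1 ≤ 2 ^ n := by exact_mod_cast Nat.lt_two_pow_self
  have hR1 : R ^ n ≤ (R + 1) ^ n := pow_le_pow_left₀ hR (by linarith) n
  calc (n + 1) * ‖b n‖ * R ^ n = ‖b n‖ * ((n + 1) * R ^ n) := by ring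
    _ ≤ ‖b n‖ * (2 ^ n * (R + 1) ^ n) := by gcongr
    _ = ‖b n‖ * (2 * (R + 1)) ^ n := by rw [mul_pow]

lemma summable (hb : IsEntireCoeffs b) (w : ℂ) : Summable fun n ↦ b n * w ^ n :=
  .of_norm <| (hb ‖w‖ (norm_nonneg w)).congr fun n ↦ by rw [norm_mul, norm_pow]

lemma hasSum_powerSum (hb : IsEntireCoeffs b) (w : ℂ) :
    HasSum (fun n ↦ b n * w ^ n) (powerSum b w) :=
  (hb.summable w).hasSum

lemma hasDerivAt_powerSum (hb : IsEntireCoeffs b) (w : ℂ) :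
    HasDerivAt (powerSum b) (powerSum (derivCoeff b) w) w := by
  set R := ‖w‖ + 1
  have hw : w ∈ Metric.ball (0 : ℂ) R := by simp [R]
  have hbound : ∀ n, ∀ z ∈ Metric.ball (0 : ℂ) R,
      ‖b n * (n * z ^ (n - 1))‖ ≤ (n + 1) * ‖b n‖ * R ^ n := by
    intro n z hz
    have hzR : ‖z‖ ≤ R := (mem_ball_zero_iff.mp hz).le
    have hpow : ‖z‖ ^ (n - 1) ≤ R ^ n :=
      (pow_le_pow_left₀ (norm_nonneg z) hzR _).trans (pow_le_pow_right₀ (by simp [R]) (n.sub_le 1))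
    rw [norm_mul, norm_mul, norm_pow, Complex.norm_natCast]
    calc ‖b n‖ * (n * ‖z‖ ^ (n - 1)) ≤ ‖b n‖ * ((n + 1) * R ^ n) := by gcongr; linarith
      _ = _ := by ring
  have hderiv := hasDerivAt_tsum_of_isPreconnected
    (hb.summable_succ_mul_norm_mul_pow (by positivity)) Metric.isOpen_ball
    (convex_ball 0 R).isPreconnected (fun n z _ ↦ (hasDerivAt_pow n z).const_mul (b n)) hbound
    (Metric.mem_ball_self (by positivity)) (hb.summable 0) hw
  refine hderiv.congr_deriv ?_
  rw [((hb.summable_succ_mul_norm_mul_pow (by positivity)).of_norm_bounded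
    fun n ↦ hbound n w hw).tsum_eq_zero_add]
  simp only [powerSum, derivCoeff, Nat.cast_zero, zero_mul, mul_zero, zero_add,
    Nat.add_sub_cancel]
  congr 1 with n
  push_cast
  ring

lemma differentiable_powerSum (hb : IsEntireCoeffs b) : Differentiable ℂ (powerSum b) :=
  fun w ↦ (hb.hasDerivAt_powerSum w).differentiableAt

end IsEntireCoeffs

lemma isEntireCoeffs_derivCoeff {b : ℕ → ℂ} (hb : IsEntireCoeffs b) :
    IsEntireCoeffs (derivCoeff b) := by
  intro R hR
  have hs := (summable_nat_add_iff 1).mpr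
    (hb.summable_succ_mul_norm_mul_pow (R := R + 1) (by linarith))
  refine hs.of_nonneg_of_le (fun n ↦ by positivity) fun n ↦ ?_
  have hR1 : R ^ n ≤ (R + 1) ^ (n + 1) :=
    (pow_le_pow_left₀ hR (by linarith) n).trans (pow_le_pow_right₀ (by linarith) n.le_succ)
  rw [derivCoeff, norm_mul, ← Nat.cast_add_one, Complex.norm_natCast]
  push_cast
  calc (n + 1) * ‖b (n + 1)‖ * R ^ n ≤ (n + 1 + 1) * ‖b (n + 1)‖ * (R + 1) ^ (n + 1) := by
        gcongr; linarith
    _ = _ := by ring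

lemma IsEntireCoeffs.mul_powerSum_derivCoeff_derivCoeff_add {b : ℕ → ℂ}
    (hb : IsEntireCoeffs b) (u : ℂ) :
    u * powerSum (derivCoeff (derivCoeff b)) u + powerSum (derivCoeff b) u =
      powerSum (fun n ↦ (n + 1) ^ 2 * b (n + 1)) u := by
  have hb' := isEntireCoeffs_derivCoeff hb
  have hsum := (((isEntireCoeffs_derivCoeff hb').hasSum_powerSum u).mul_left u).add
    ((hasSum_nat_add_iff' 1).mpr (hb'.hasSum_powerSum u))
  have hterm : ∀ n : ℕ, ((n + 1 : ℕ) + 1 : ℂ) ^ 2 * b (n + 1 + 1) * u ^ (n + 1) =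
      u * (derivCoeff (derivCoeff b) n * u ^ n) + derivCoeff b (n + 1) * u ^ (n + 1) := by
    intro n
    simp only [derivCoeff]
    push_cast
    ring
  have hvalue : u * powerSum (derivCoeff (derivCoeff b)) u + powerSum (derivCoeff b) u - b 1 =
      u * powerSum (derivCoeff (derivCoeff b)) u +
        (powerSum (derivCoeff b) u - ∑ i ∈ Finset.range 1, derivCoeff b i * u ^ i) := by
    simp only [Finset.range_one, derivCoeff, Finset.sum_singleton, CharP.cast_eq_zero, zero_add,
      one_mul, pow_zero, mul_one]
    ring
  simp_rw [← hterm, ← hvalue] at hsum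
  exact ((hasSum_nat_add_iff' 1).mp (by simpa using hsum)).tsum_eq.symm

noncomputable def besselCoeff (n : ℕ) : ℂ := ((n ! : ℂ) ^ 2)⁻¹

lemma isEntireCoeffs_besselCoeff : IsEntireCoeffs besselCoeff := by
  intro R hR
  refine (Real.summable_pow_div_factorial R).of_nonneg_of_le (fun n ↦ by positivity) fun n ↦ ?_
  have hfac : (1 : ℝ) ≤ n ! := by exact_mod_cast n.factorial_pos
  rw [besselCoeff, norm_inv, norm_pow, Complex.norm_natCast, inv_mul_eq_div]
  exact div_le_div_of_nonneg_left (by positivity) (by positivity) (by nlinarith)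

lemma succ_sq_mul_besselCoeff_succ (n : ℕ) :
    (n + 1) ^ 2 * besselCoeff (n + 1) = besselCoeff n := by
  simp only [besselCoeff, Nat.factorial_succ]
  push_cast
  field_simp

lemma besselCoeff_ode (u : ℂ) :
    u * powerSum (derivCoeff (derivCoeff besselCoeff)) u + powerSum (derivCoeff besselCoeff) u =
      powerSum besselCoeff u := by
  simp only [isEntireCoeffs_besselCoeff.mul_powerSum_derivCoeff_derivCoeff_add,
    succ_sq_mul_besselCoeff_succ]

lemma integral_sin_pow_two_mul (n : ℕ) :
    ∫ s in -(π / 2)..π / 2, sin s ^ (2 * n) = π * (2 * n)! / (4 ^ n * (n ! : ℝ) ^ 2) := by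
  induction n with
  | zero => simp
  | succ n ih =>
    rw [Nat.mul_succ, integral_sin_pow, ih]
    simp only [cos_neg, cos_pi_div_two, mul_zero, sub_zero, zero_div, zero_add,
      Nat.factorial_succ]
    push_cast
    field_simp
    ring

lemma integral_cosh_mul_sin (x : ℂ) :
    ∫ s in -(π / 2)..π / 2, Complex.cosh (x * sin s) = π * powerSum besselCoeff (x ^ 2 / 4) := by
  have hterm : ∀ n, ∫ s in -(π / 2)..π / 2, (x * sin s) ^ (2 * n) / (2 * n)! =
      π * (besselCoeff n * (x ^ 2 / 4) ^ n) := by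
    intro n
    have h2n : ((2 * n)! : ℂ) ≠ 0 := by exact_mod_cast (2 * n).factorial_ne_zero
    simp_rw [mul_pow, mul_div_right_comm, ← Complex.ofReal_pow,
      intervalIntegral.integral_const_mul, intervalIntegral.integral_ofReal,
      integral_sin_pow_two_mul, besselCoeff, div_pow]
    push_cast
    field_simp
    ring
  have hbound : ∀ n (s : ℝ), ‖(x * sin s) ^ (2 * n) / (2 * n)!‖ ≤ ‖x‖ ^ (2 * n) / (2 * n)! := by
    intro n s
    rw [norm_div, norm_pow, norm_mul, Complex.norm_real, Complex.norm_natCast]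
    gcongr
    exact mul_le_of_le_one_right (norm_nonneg x) (abs_sin_le_one s)
  have hsum : HasSum (fun n ↦ π * (besselCoeff n * (x ^ 2 / 4) ^ n))
      (∫ s in -(π / 2)..π / 2, Complex.cosh (x * sin s)) := by
    simp_rw [← hterm]
    exact intervalIntegral.hasSum_integral_of_dominated_convergence
      (fun n _ ↦ ‖x‖ ^ (2 * n) / (2 * n)!) (fun n ↦ by fun_prop)
      (fun n ↦ .of_forall fun s _ ↦ hbound n s)
      (.of_forall fun _ _ ↦ (Real.hasSum_cosh ‖x‖).summable) intervalIntegrable_const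
      (.of_forall fun s _ ↦ Complex.hasSum_cosh (x * sin s))
  exact hsum.unique ((isEntireCoeffs_besselCoeff.hasSum_powerSum _).mul_left _)

lemma rker_eq_powerSum_besselCoeff (k : ℂ) {y t : ℝ} (h : t ^ 2 ≤ y ^ 2) :
    rker k y t = powerSum besselCoeff (k ^ 2 / 4 * (y ^ 2 - t ^ 2)) / 2 := by
  have hsq : ((√(y ^ 2 - t ^ 2) : ℝ) : ℂ) ^ 2 = y ^ 2 - t ^ 2 := by
    rw [← Complex.ofReal_pow, sq_sqrt (by linarith)]
    push_cast
    ring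
  have hπ : (π : ℂ) ≠ 0 := Complex.ofReal_ne_zero.mpr pi_ne_zero
  rw [rker, integral_cosh_mul_sin, mul_pow, hsq]
  field_simp

section QuadraticComposition

variable {G G' G'' : ℂ → ℂ}

lemma hasDerivAt_comp_add_mul_sq (hG : ∀ z, HasDerivAt G (G' z) z) (c d : ℂ) (x : ℝ) :
    HasDerivAt (fun x : ℝ ↦ G (c + d * x ^ 2)) (2 * d * x * G' (c + d * x ^ 2)) x := by
  have hz := (hG _).comp (x : ℂ) (((hasDerivAt_pow 2 (x : ℂ)).const_mul d).const_add c)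
  exact hz.comp_ofReal.congr_deriv (by push_cast; ring)

lemma deriv_deriv_comp_add_mul_sq (hG : ∀ z, HasDerivAt G (G' z) z)
    (hG' : ∀ z, HasDerivAt G' (G'' z) z) (c d : ℂ) (x : ℝ) :
    deriv (deriv fun x : ℝ ↦ G (c + d * x ^ 2)) x =
      2 * d * G' (c + d * x ^ 2) + 4 * d ^ 2 * x ^ 2 * G'' (c + d * x ^ 2) := by
  have hfirst :
      deriv (fun x : ℝ ↦ G (c + d * x ^ 2)) = fun x : ℝ ↦ 2 * d * x * G' (c + d * x ^ 2) :=
    funext fun x ↦ (hasDerivAt_comp_add_mul_sq hG c d x).deriv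
  rw [hfirst]
  refine ((((hasDerivAt_id x).ofReal_comp.const_mul (2 * d)).mul
    (hasDerivAt_comp_add_mul_sq hG' c d x)).congr_deriv ?_).deriv
  simp only [id, Complex.ofReal_one]
  ring

lemma deriv_deriv_sub_deriv_deriv_comp_sq_sub_sq (hG : ∀ z, HasDerivAt G (G' z) z)
    (hG' : ∀ z, HasDerivAt G' (G'' z) z) (q : ℂ) (y t : ℝ) :
    deriv (deriv fun t : ℝ ↦ G (q * (y ^ 2 - t ^ 2))) t -
        deriv (deriv fun y : ℝ ↦ G (q * (y ^ 2 - t ^ 2))) y =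
      -4 * q * (G' (q * (y ^ 2 - t ^ 2)) + q * (y ^ 2 - t ^ 2) * G'' (q * (y ^ 2 - t ^ 2))) := by
  have ht : (fun t : ℝ ↦ G (q * (y ^ 2 - t ^ 2))) = fun t : ℝ ↦ G (q * y ^ 2 + -q * t ^ 2) := by
    ext t; congr 1; ring
  have hy : (fun y : ℝ ↦ G (q * (y ^ 2 - t ^ 2))) = fun y : ℝ ↦ G (-q * t ^ 2 + q * y ^ 2) := by
    ext y; congr 1; ring
  rw [ht, hy, deriv_deriv_comp_add_mul_sq hG hG', deriv_deriv_comp_add_mul_sq hG hG',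
    show q * y ^ 2 + -q * t ^ 2 = q * (y ^ 2 - t ^ 2) by ring,
    show -q * t ^ 2 + q * y ^ 2 = q * (y ^ 2 - t ^ 2) by ring]
  ring

end QuadraticComposition

/-- For fixed `k ∈ ℂ`, on the open region `{(y,t) : y > |t|}` the
function `(y,t) ↦ r(k,y,t)` is `C²` and satisfies `∂²r/∂t² − ∂²r/∂y² + k² r = 0`. -/
theorem rker_contDiff_and_kleinGordon (k : ℂ) :
    ContDiffOn ℝ 2 (fun p : ℝ × ℝ => rker k p.1 p.2) {p : ℝ × ℝ | |p.2| < p.1} ∧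
    ∀ y t : ℝ, |t| < y →
      deriv (fun t' => deriv (fun t'' => rker k y t'') t') t -
        deriv (fun y' => deriv (fun y'' => rker k y'' t) y') y +
        k ^ 2 * rker k y t = 0 := by
  have hb := isEntireCoeffs_besselCoeff
  set G := fun z ↦ powerSum besselCoeff z / 2
  have hr : ∀ y t : ℝ, |t| < y → rker k y t = G (k ^ 2 / 4 * (y ^ 2 - t ^ 2)) := fun y t hyt ↦
    rker_eq_powerSum_besselCoeff k (sq_le_sq.mpr (hyt.le.trans (le_abs_self y)))
  refine ⟨?_, fun y t hyt ↦ ?_⟩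
  · have hofReal : ContDiff ℝ 2 ((↑) : ℝ → ℂ) := Complex.ofRealCLM.contDiff
    have hG : ContDiff ℝ 2 G := (hb.differentiable_powerSum.contDiff.restrict_scalars ℝ).div_const 2
    exact (hG.comp (by fun_prop)).contDiffOn.congr fun p hp ↦ hr p.1 p.2 hp
  have htt : (fun t' ↦ rker k y t') =ᶠ[𝓝 t] fun t' : ℝ ↦ G (k ^ 2 / 4 * (y ^ 2 - t' ^ 2)) :=
    ((continuous_abs.tendsto t).eventually (gt_mem_nhds hyt)).mono fun t' ht' ↦ hr y t' ht'
  have hyy : (fun y' ↦ rker k y' t) =ᶠ[𝓝 y] fun y' : ℝ ↦ G (k ^ 2 / 4 * (y' ^ 2 - t ^ 2)) :=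
    (lt_mem_nhds hyt).mono fun y' hy' ↦ hr y' t hy'
  rw [htt.deriv.deriv_eq, hyy.deriv.deriv_eq, hr y t hyt,
    deriv_deriv_sub_deriv_deriv_comp_sq_sub_sq (fun z ↦ (hb.hasDerivAt_powerSum z).div_const 2)
      (fun z ↦ ((isEntireCoeffs_derivCoeff hb).hasDerivAt_powerSum z).div_const 2)]
  linear_combination -k ^ 2 / 2 * besselCoeff_ode (k ^ 2 / 4 * (y ^ 2 - t ^ 2))
end

section
/- Fix h > 0, ξ ∈ ℝ, and real y, t with y ≥ |t|. Then the function c ↦ (1/(2π)) ∫_ℝ e^{−h(s+ic)²} · r(s+ic, y, t) · e^{i(s+ic)ξ} ds is constant on ℝ; in particular, for every c ∈ ℝ this integral equals K^N_h(ξ; y, t), the value at c = 0. -/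
open MeasureTheory

/-- `K^N_h(ξ; y, t) = (1/(2π)) ∫_ℝ e^{−h k²} r(k,y,t) e^{i k ξ} dk`. -/
noncomputable def KN (h : ℝ) (ξ y t : ℝ) : ℂ :=
  (1 / (2 * (Real.pi : ℂ))) *
    ∫ k : ℝ, Complex.exp (-(h : ℂ) * (k : ℂ) ^ 2) * rker (k : ℂ) y t *
      Complex.exp (Complex.I * (k : ℂ) * (ξ : ℂ))

/-- `K^D_h(ξ; y, t) = (1/(2π)) ∫_ℝ e^{−h k²} D(k,y,t) e^{i k ξ} dk`. -/
noncomputable def KD (h : ℝ) (ξ y t : ℝ) : ℂ :=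
  (1 / (2 * (Real.pi : ℂ))) *
    ∫ k : ℝ, Complex.exp (-(h : ℂ) * (k : ℂ) ^ 2) * Dker (k : ℂ) y t *
      Complex.exp (Complex.I * (k : ℂ) * (ξ : ℂ))

/-! The integrand `g(k) = e^{-hk²} r(k,y,t) e^{ikξ}` is entire, since `r` is an integral of
`cosh` depending holomorphically on `k`, and `|r(k,y,t)| ≤ e^{|k|z}`. Hence on the strip between
`ℝ` and `ℝ + ic` it is dominated by `C e^{-h x²/2}`: the horizontal integrals converge and the
vertical sides of the rectangles `[-T, T] × [0, c]` contribute nothing as `T → ∞`, so Cauchy's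
theorem for rectangles moves the line of integration. -/

open Complex Filter Topology MeasureTheory Set

lemma Complex.norm_cosh_le_exp_norm (w : ℂ) : ‖cosh w‖ ≤ Real.exp ‖w‖ := by
  have h₁ := norm_exp_le_exp_norm w
  have h₂ := norm_exp_le_exp_norm (-w)
  rw [norm_neg] at h₂
  rw [cosh, norm_div, RCLike.norm_ofNat]
  linarith [norm_add_le (exp w) (exp (-w))]

lemma Complex.norm_sinh_le_exp_norm (w : ℂ) : ‖sinh w‖ ≤ Real.exp ‖w‖ := by
  have h₁ := norm_exp_le_exp_norm w
  have h₂ := norm_exp_le_exp_norm (-w)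
  rw [norm_neg] at h₂
  rw [sinh, norm_div, RCLike.norm_ofNat]
  linarith [norm_sub_le (exp w) (exp (-w))]

theorem differentiable_intervalIntegral_cosh_mul {φ : ℝ → ℂ} (hφ : Continuous φ) {M : ℝ}
    (hM : ∀ s, ‖φ s‖ ≤ M) (a b : ℝ) :
    Differentiable ℂ fun k : ℂ => ∫ s in a..b, cosh (k * φ s) := by
  intro k₀
  have hM₀ : 0 ≤ M := (norm_nonneg _).trans (hM 0)
  have hderiv_le : ∀ s, ∀ k ∈ Metric.ball k₀ 1,
      ‖sinh (k * φ s) * φ s‖ ≤ Real.exp ((‖k₀‖ + 1) * M) * M := by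
    intro s k hk
    have hk' : ‖k‖ ≤ ‖k₀‖ + 1 := by
      linarith [norm_le_norm_add_norm_sub' k k₀, mem_ball_iff_norm.1 hk]
    rw [norm_mul]
    refine mul_le_mul ((norm_sinh_le_exp_norm _).trans (Real.exp_le_exp.2 ?_)) (hM s)
      (norm_nonneg _) (Real.exp_pos _).le
    rw [norm_mul]
    exact mul_le_mul hk' (hM s) (norm_nonneg _) (by positivity)
  exact (intervalIntegral.hasDerivAt_integral_of_dominated_loc_of_deriv_le
    (F := fun k s => cosh (k * φ s)) (F' := fun k s => sinh (k * φ s) * φ s)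
    (Metric.ball_mem_nhds k₀ one_pos)
    (Eventually.of_forall fun k => (by fun_prop : Continuous _).aestronglyMeasurable)
    ((by fun_prop : Continuous fun s => cosh (k₀ * φ s)).intervalIntegrable _ _)
    (by fun_prop : Continuous fun s => sinh (k₀ * φ s) * φ s).aestronglyMeasurable
    (ae_of_all _ fun s _ => hderiv_le s) intervalIntegrable_const
    (ae_of_all _ fun s _ k _ => by
      simpa using ((hasDerivAt_id k).mul_const (φ s)).ccosh)).2.differentiableAt

theorem norm_rker_le (k : ℂ) (y t : ℝ) :
    ‖rker k y t‖ ≤ Real.exp (‖k‖ * √(y ^ 2 - t ^ 2)) := by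
  set z := √(y ^ 2 - t ^ 2)
  have hz : 0 ≤ z := Real.sqrt_nonneg _
  have hcosh_le : ∀ s : ℝ, ‖cosh (k * z * Real.sin s)‖ ≤ Real.exp (‖k‖ * z) := fun s =>
    (norm_cosh_le_exp_norm _).trans <| Real.exp_le_exp.2 <| by
      simp only [norm_mul, norm_real, Real.norm_eq_abs, abs_of_nonneg hz]
      exact mul_le_of_le_one_right (by positivity) (Real.abs_sin_le_one s)
  have hpi := Real.pi_pos
  have hint : ‖∫ s in (-(Real.pi / 2))..(Real.pi / 2), cosh (k * z * Real.sin s)‖ ≤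
      Real.exp (‖k‖ * z) * Real.pi :=
    (intervalIntegral.norm_integral_le_of_norm_le_const fun s _ => hcosh_le s).trans_eq <| by
      rw [sub_neg_eq_add, add_halves, abs_of_pos hpi]
  calc ‖rker k y t‖ ≤ 1 / (2 * Real.pi) * (Real.exp (‖k‖ * z) * Real.pi) := by
        rw [rker, norm_mul]
        gcongr
        simp [abs_of_pos hpi]
    _ = Real.exp (‖k‖ * z) / 2 := by field_simp
    _ ≤ Real.exp (‖k‖ * z) := by linarith [Real.exp_pos (‖k‖ * z)]

theorem differentiable_rker (y t : ℝ) : Differentiable ℂ fun k : ℂ => rker k y t := by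
  set z := √(y ^ 2 - t ^ 2)
  have hz : 0 ≤ z := Real.sqrt_nonneg _
  have hbound : ∀ s, ‖(z : ℂ) * Real.sin s‖ ≤ z := fun s => by
    simp only [norm_mul, norm_real, Real.norm_eq_abs, abs_of_nonneg hz]
    exact mul_le_of_le_one_right hz (Real.abs_sin_le_one s)
  simpa only [rker, mul_assoc] using
    (differentiable_intervalIntegral_cosh_mul (by fun_prop) hbound _ _).const_mul _

theorem integral_add_mul_I_eq_integral {E : Type*} [NormedAddCommGroup E] [NormedSpace ℂ E]
    [CompleteSpace E] {f : ℂ → E} (hf : Differentiable ℂ f) {c : ℝ} {b : ℝ → ℝ}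
    (hb : Integrable b) (hb_tendsto : Tendsto b (cocompact ℝ) (𝓝 0))
    (hfb : ∀ x y : ℝ, y ∈ uIcc 0 c → ‖f (x + y * I)‖ ≤ b x) :
    ∫ x : ℝ, f (x + c * I) = ∫ x : ℝ, f x := by
  have hline : ∀ y ∈ uIcc 0 c, Integrable fun x : ℝ => f (x + y * I) := fun y hy =>
    hb.mono' (hf.continuous.comp (by fun_prop)).aestronglyMeasurable
      (ae_of_all _ fun x => hfb x y hy)
  set V : ℝ → E := fun x => ∫ y in (0 : ℝ)..c, f (x + y * I)
  have hV : Tendsto V (cocompact ℝ) (𝓝 0) := by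
    refine squeeze_zero_norm (fun x => ?_) (by simpa using hb_tendsto.mul_const |c|)
    simpa using intervalIntegral.norm_integral_le_of_norm_le_const
      fun y hy => hfb x y (uIoc_subset_uIcc hy)
  have hrect : ∀ T : ℝ, (∫ x in -T..T, f x) - (∫ x in -T..T, f (x + c * I))
      + I • V T - I • V (-T) = 0 := fun T => by
    simpa [V] using integral_boundary_rect_eq_zero_of_differentiableOn f (-T) (T + c * I)
      hf.differentiableOn
  have hlim := (((intervalIntegral_tendsto_integral (by simpa using hline 0 left_mem_uIcc)
    tendsto_neg_atTop_atBot tendsto_id).sub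
    (intervalIntegral_tendsto_integral (hline c right_mem_uIcc)
    tendsto_neg_atTop_atBot tendsto_id)).add
    ((hV.mono_left atTop_le_cocompact).const_smul I)).sub
    (((hV.mono_left atBot_le_cocompact).comp tendsto_neg_atTop_atBot).const_smul I)
  simp only [Function.comp_def, id_eq, hrect, smul_zero, add_zero, sub_zero] at hlim
  exact (sub_eq_zero.1 (tendsto_nhds_unique hlim tendsto_const_nhds)).symm

noncomputable def knIntegrand (h ξ y t : ℝ) (k : ℂ) : ℂ :=
  exp (-(h : ℂ) * k ^ 2) * rker k y t * exp (I * k * ξ)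

theorem differentiable_knIntegrand (h ξ y t : ℝ) : Differentiable ℂ (knIntegrand h ξ y t) := by
  have := differentiable_rker y t
  unfold knIntegrand
  fun_prop

theorem norm_knIntegrand_le (h ξ y t : ℝ) (k : ℂ) :
    ‖knIntegrand h ξ y t k‖ ≤
      Real.exp (-h * k.re ^ 2 + h * k.im ^ 2 + ‖k‖ * √(y ^ 2 - t ^ 2) + |ξ| * |k.im|) := by
  have hre₁ : (-(h : ℂ) * k ^ 2).re = -h * k.re ^ 2 + h * k.im ^ 2 := by simp [sq]; ring
  have hre₂ : (I * k * ξ).re = -(k.im * ξ) := by simp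
  have hξ : -(k.im * ξ) ≤ |ξ| * |k.im| := by
    rw [mul_comm, ← abs_mul]; exact neg_le_abs _
  calc ‖knIntegrand h ξ y t k‖
      = Real.exp (-h * k.re ^ 2 + h * k.im ^ 2) * ‖rker k y t‖ * Real.exp (-(k.im * ξ)) := by
        simp only [knIntegrand, norm_mul, norm_exp, hre₁, hre₂]
    _ ≤ Real.exp (-h * k.re ^ 2 + h * k.im ^ 2) * Real.exp (‖k‖ * √(y ^ 2 - t ^ 2)) *
        Real.exp (|ξ| * |k.im|) := by
        gcongr
        exact norm_rker_le k y t
    _ = _ := by rw [← Real.exp_add, ← Real.exp_add]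

theorem norm_knIntegrand_add_mul_I_le {h : ℝ} (hh : 0 < h) (ξ y t : ℝ) {R : ℝ} (x w : ℝ)
    (hw : |w| ≤ R) :
    ‖knIntegrand h ξ y t (x + w * I)‖ ≤
      Real.exp (h * R ^ 2 + R * (√(y ^ 2 - t ^ 2) + |ξ|) + √(y ^ 2 - t ^ 2) ^ 2 / (2 * h)) *
        Real.exp (-(h / 2) * x ^ 2) := by
  set z := √(y ^ 2 - t ^ 2)
  have hz : 0 ≤ z := Real.sqrt_nonneg _
  have hnorm : ‖(x : ℂ) + w * I‖ ≤ |x| + |w| := by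
    simpa using norm_le_abs_re_add_abs_im ((x : ℂ) + w * I)
  have hw2 : w ^ 2 ≤ R ^ 2 := by nlinarith [sq_abs w, abs_nonneg w]
  have hxz : |x| * z ≤ h / 2 * x ^ 2 + z ^ 2 / (2 * h) := by
    rw [← sub_nonneg, ← sq_abs x]
    have : h / 2 * |x| ^ 2 + z ^ 2 / (2 * h) - |x| * z = (h * |x| - z) ^ 2 / (2 * h) := by
      field_simp; ring
    rw [this]; positivity
  have hre : ((x : ℂ) + w * I).re = x := by simp
  have him : ((x : ℂ) + w * I).im = w := by simp
  refine (norm_knIntegrand_le h ξ y t _).trans ?_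
  rw [← Real.exp_add, Real.exp_le_exp, hre, him]
  nlinarith [mul_le_mul_of_nonneg_right hnorm hz, mul_le_mul_of_nonneg_right hw hz,
    mul_le_mul_of_nonneg_left hw (abs_nonneg ξ)]

theorem contour_shift_KN_general (h : ℝ) (hh : 0 < h) (ξ y t : ℝ) (c : ℝ) :
    (1 / (2 * (Real.pi : ℂ))) *
        (∫ s : ℝ, Complex.exp (-(h : ℂ) * ((s : ℂ) + Complex.I * (c : ℂ)) ^ 2) *
          rker ((s : ℂ) + Complex.I * (c : ℂ)) y t *
          Complex.exp (Complex.I * ((s : ℂ) + Complex.I * (c : ℂ)) * (ξ : ℂ)))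
      = KN h ξ y t := by
  have hshift := integral_add_mul_I_eq_integral (c := c) (differentiable_knIntegrand h ξ y t)
    ((integrable_exp_neg_mul_sq (half_pos hh)).const_mul _)
    (by simpa using (tendsto_rpow_abs_mul_exp_neg_mul_sq_cocompact (half_pos hh) 0).const_mul _)
    fun x w hw => norm_knIntegrand_add_mul_I_le hh ξ y t x w
      (by simpa using abs_sub_left_of_mem_uIcc hw)
  simp_rw [mul_comm I (c : ℂ)]
  exact congrArg _ hshift

/-- For `h > 0`, `ξ ∈ ℝ`, `y ≥ |t|`, the contour integral
`(1/(2π)) ∫_ℝ e^{−h(s+ic)²} r(s+ic,y,t) e^{i(s+ic)ξ} ds` does not depend on `c ∈ ℝ`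
and equals its value `K^N_h(ξ; y, t)` at `c = 0`. -/
theorem contour_shift_KN (h : ℝ) (hh : 0 < h) (ξ y t : ℝ) (hyt : |t| ≤ y) (c : ℝ) :
    (1 / (2 * (Real.pi : ℂ))) *
        (∫ s : ℝ, Complex.exp (-(h : ℂ) * ((s : ℂ) + Complex.I * (c : ℂ)) ^ 2) *
          rker ((s : ℂ) + Complex.I * (c : ℂ)) y t *
          Complex.exp (Complex.I * ((s : ℂ) + Complex.I * (c : ℂ)) * (ξ : ℂ)))
      = KN h ξ y t :=
  contour_shift_KN_general h hh ξ y t c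
end
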